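/- arXiv:1503.01592 — 5 statements merged into one kernel-verified Lean document; each statement's English description precedes it below -/
import Mathlib

section
/- Let (T, V) be a rooted tree-decomposition of a graph G, let t be a node of T, and let P be a path in G that lies entirely in the union of the parts indexed by descendants of t, joins two distinct components of the induced subgraph G[V_t], and is as short as possible with these properties. Then P has exactly two vertices in V_t (its endpoints), and there is a unique child s of t such that all internal vertices of P lie in V_{T_s} \ V_t. -/
/-!
If an inner vertex of `P` lay in `V_t`, one of the two halves of `P` at it would be a shorter
path joining two components of `G[V_t]`. Hence the inner vertices of `P` form a connected set
avoiding `V_t`. In a tree-decomposition, the nodes whose bags meet such a set span a connected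
subgraph of `T - t`, and a connected subgraph of `T - t` meets at most one branch `T_s` below `t`.
-/

open SimpleGraph

universe u

/-- `x` and `y` are joined by a walk in `G` all of whose vertices lie in `S`. -/
def ConnIn {V : Type u} (G : SimpleGraph V) (S : Set V) (x y : V) : Prop :=
  ∃ p : G.Walk x y, ∀ v ∈ p.support, v ∈ S

/-- `S` is a (nonempty) connected vertex set of `G`, i.e. `G[S]` is connected. -/
def IsConnSet {V : Type u} (G : SimpleGraph V) (S : Set V) : Prop :=
  S.Nonempty ∧ ∀ x ∈ S, ∀ y ∈ S, ConnIn G S x y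

/-- A tree-decomposition of `G` over the tree `T`. -/
structure TreeDecomp {V ι : Type u} (G : SimpleGraph V) (T : SimpleGraph ι) where
  isTree : T.IsTree
  bag : ι → Set V
  exists_bag : ∀ v : V, ∃ t, v ∈ bag t
  exists_bag_adj : ∀ ⦃u v : V⦄, G.Adj u v → ∃ t, u ∈ bag t ∧ v ∈ bag t
  bag_sep : ∀ ⦃t₁ t₃ : ι⦄ (p : T.Walk t₁ t₃), p.IsPath → ∀ t₂ ∈ p.support,
      bag t₁ ∩ bag t₃ ⊆ bag t₂

/-- The union of the bags `B u` over `u ∈ A`. -/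
def unionBags {V ι : Type u} (B : ι → Set V) (A : Set ι) : Set V := ⋃ u ∈ A, B u

/-- `s` is a descendant of `t` in the tree `T` rooted at `r`:
`t` lies on the (unique) `r`–`s` path. -/
def Desc {ι : Type u} (T : SimpleGraph ι) (r t s : ι) : Prop :=
  ∃ p : T.Walk r s, p.IsPath ∧ t ∈ p.support

/-- The set of descendants of `t` (the subtree `T_t`). -/
def descSet {ι : Type u} (T : SimpleGraph ι) (r t : ι) : Set ι := {s | Desc T r t s}

/-- `s` is a child of `t` in the tree `T` rooted at `r`. -/
def IsChild {ι : Type u} (T : SimpleGraph ι) (r t s : ι) : Prop :=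
  T.Adj t s ∧ Desc T r t s

/-- The vertex set of the component of `t₁` in `T` minus the edge `t₁t₂`. -/
def Side {ι : Type u} (T : SimpleGraph ι) (t₁ t₂ : ι) : Set ι :=
  {u | ∃ p : T.Walk u t₁, p.IsPath ∧ t₂ ∉ p.support}

/-- The family of bags `B` is stable: for every tree edge `t₁t₂`, both sides
induce connected subgraphs of `G`. -/
def StableBags {V ι : Type u} (G : SimpleGraph V) (T : SimpleGraph ι) (B : ι → Set V) : Prop :=
  ∀ ⦃t₁ t₂ : ι⦄, T.Adj t₁ t₂ → IsConnSet G (unionBags B (Side T t₁ t₂))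

def TreeDecomp.Stable {V ι : Type u} {G : SimpleGraph V} {T : SimpleGraph ι}
    (td : TreeDecomp G T) : Prop :=
  StableBags G T td.bag

/-- `P` is a `t`-admissible path (w.r.t. the root `r` and bags `B`): a shortest
path lying in `V_{T_t}` joining two distinct components of `G[B t]`. -/
structure IsAdmissible {V ι : Type u} (G : SimpleGraph V) (T : SimpleGraph ι)
    (B : ι → Set V) (r t : ι) {x y : V} (P : G.Walk x y) : Prop where
  isPath : P.IsPath
  support_sub : ∀ v ∈ P.support, v ∈ unionBags B (descSet T r t)
  fst_mem : x ∈ B t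
  snd_mem : y ∈ B t
  not_conn : ¬ ConnIn G (B t) x y
  minimal : ∀ ⦃x' y' : V⦄ (Q : G.Walk x' y'), Q.IsPath →
      (∀ v ∈ Q.support, v ∈ unionBags B (descSet T r t)) →
      x' ∈ B t → y' ∈ B t → ¬ ConnIn G (B t) x' y' → P.length ≤ Q.length

/-- The updated bags obtained by adding the path `P` as in `(*)`:
`W_u = V_u ∪ (V(P) ∩ V_{T_u})` for descendants `u` of `t`, and `W_u = V_u` otherwise. -/
def updatedBag {V ι : Type u} (T : SimpleGraph ι) (B : ι → Set V) (r t : ι)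
    {G : SimpleGraph V} {x y : V} (P : G.Walk x y) (u : ι) : Set V :=
  B u ∪ {v | Desc T r t u ∧ v ∈ P.support ∧ v ∈ unionBags B (descSet T r u)}

/-- The tree-width of `G`: the least `k` such that `G` has a tree-decomposition
all of whose bags have at most `k + 1` vertices. -/
noncomputable def treewidth {V : Type u} (G : SimpleGraph V) : ℕ :=
  sInf {k | ∃ (ι : Type u) (T : SimpleGraph ι) (td : TreeDecomp G T),
    ∀ t, (td.bag t).ncard ≤ k + 1}

/-- A tree-decomposition is connected if every bag is a connected vertex set. -/
def TreeDecomp.IsConn {V ι : Type u} {G : SimpleGraph V} {T : SimpleGraph ι}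
    (td : TreeDecomp G T) : Prop :=
  ∀ t, IsConnSet G (td.bag t)

/-- The connected tree-width of `G`. -/
noncomputable def ctw {V : Type u} (G : SimpleGraph V) : ℕ :=
  sInf {k | ∃ (ι : Type u) (T : SimpleGraph ι) (td : TreeDecomp G T),
    td.IsConn ∧ ∀ t, (td.bag t).ncard ≤ k + 1}

/-- The weak connected tree-width of `G`: the least `k` such that `G` has a
tree-decomposition each of whose bags is contained in a connected set of at
most `k + 1` vertices. -/
noncomputable def wctw {V : Type u} (G : SimpleGraph V) : ℕ :=
  sInf {k | ∃ (ι : Type u) (T : SimpleGraph ι) (td : TreeDecomp G T),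
    ∀ t, ∃ X, td.bag t ⊆ X ∧ IsConnSet G X ∧ X.ncard ≤ k + 1}

/-- The characteristic vector over GF(2) of the edge set of a walk. -/
noncomputable def walkChar {V : Type u} {G : SimpleGraph V} {x y : V}
    (p : G.Walk x y) : Sym2 V → ZMod 2 :=
  fun e => by classical exact if e ∈ p.edges then 1 else 0

/-- The characteristic vectors of the cycles of `G` of length at most `ℓ`. -/
def cycleChars {V : Type u} (G : SimpleGraph V) (ℓ : ℕ) : Set (Sym2 V → ZMod 2) :=
  {f | ∃ (v : V) (p : G.Walk v v), p.IsCycle ∧ p.length ≤ ℓ ∧ f = walkChar p}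

/-- The cycles of length at most `ℓ` generate the cycle space of `G` over GF(2). -/
def GeneratesLE {V : Type u} (G : SimpleGraph V) (ℓ : ℕ) : Prop :=
  ∀ ⦃v : V⦄ (p : G.Walk v v), p.IsCycle →
    walkChar p ∈ Submodule.span (ZMod 2) (cycleChars G ℓ)

/-- `ℓ(G)`: the least `ℓ` such that the cycles of length at most `ℓ`
generate the cycle space of `G`. -/
noncomputable def ellGraph {V : Type u} (G : SimpleGraph V) : ℕ :=
  sInf {ℓ | GeneratesLE G ℓ}

/-- `Γ` is a set of cycles of `G` generating its cycle space over GF(2). -/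
def GeneratesSet {V : Type u} (G : SimpleGraph V) (Γ : Set (Σ v : V, G.Walk v v)) : Prop :=
  (∀ c ∈ Γ, c.2.IsCycle) ∧
  ∀ ⦃v : V⦄ (p : G.Walk v v), p.IsCycle →
    walkChar p ∈ Submodule.span (ZMod 2) {f | ∃ c ∈ Γ, f = walkChar c.2}

/-- A bramble: a collection of connected vertex sets, any two of which have
connected union. -/
def IsBramble {V : Type u} (G : SimpleGraph V) (B : Set (Set V)) : Prop :=
  (∀ S ∈ B, IsConnSet G S) ∧ ∀ S ∈ B, ∀ S' ∈ B, IsConnSet G (S ∪ S')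

/-- `X` is a connected cover of the bramble `B`. -/
def IsConnCover {V : Type u} (G : SimpleGraph V) (B : Set (Set V)) (X : Set V) : Prop :=
  IsConnSet G X ∧ ∀ S ∈ B, (X ∩ S).Nonempty

/-- The connected order of a bramble: the least size of a connected cover. -/
noncomputable def connOrder {V : Type u} (G : SimpleGraph V) (B : Set (Set V)) : ℕ :=
  sInf {n | ∃ X, IsConnCover G B X ∧ X.ncard = n}

/-- The maximum connected order of a bramble of `G`. -/
noncomputable def cbn {V : Type u} (G : SimpleGraph V) : ℕ :=
  sSup {n | ∃ B, IsBramble G B ∧ connOrder G B = n}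

/-- A geodesic cycle: a cycle containing a shortest `G`-path between any two
of its vertices. -/
def IsGeodesicCycle {V : Type u} (G : SimpleGraph V) {v : V} (p : G.Walk v v) : Prop :=
  p.IsCycle ∧ ∀ x ∈ p.support, ∀ y ∈ p.support,
    ∃ q : G.Walk x y, q.length = G.dist x y ∧ ∀ e ∈ q.edges, e ∈ p.edges

/-- The graph obtained from `K_n` by subdividing every edge exactly `k` times:
the edge between `i < j` is replaced by the path
`i, ((i,j),0), ((i,j),1), …, ((i,j),k-1), j`. -/
def subK (n k : ℕ) : SimpleGraph (Fin n ⊕ ({p : Fin n × Fin n // p.1 < p.2} × Fin k)) :=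
  SimpleGraph.fromRel fun u v =>
    match u, v with
    | Sum.inl i, Sum.inl j => i < j ∧ k = 0
    | Sum.inl i, Sum.inr (e, c) =>
        (e.val.1 = i ∧ (c : ℕ) = 0) ∨ (e.val.2 = i ∧ (c : ℕ) = k - 1)
    | Sum.inr (e, c), Sum.inr (e', c') => e = e' ∧ (c' : ℕ) = (c : ℕ) + 1
    | _, _ => False

namespace ConnIn

variable {V : Type u} {G : SimpleGraph V} {S S' : Set V} {x y z : V}

theorem refl (hx : x ∈ S) : ConnIn G S x x :=
  ⟨.nil, by simpa using hx⟩

theorem of_adj (h : G.Adj x y) (hx : x ∈ S) (hy : y ∈ S) : ConnIn G S x y :=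
  ⟨.cons h .nil, by simp [hx, hy]⟩

theorem symm (h : ConnIn G S x y) : ConnIn G S y x := by
  obtain ⟨p, hp⟩ := h
  exact ⟨p.reverse, by simpa using hp⟩

theorem trans (hxy : ConnIn G S x y) (hyz : ConnIn G S y z) : ConnIn G S x z := by
  obtain ⟨p, hp⟩ := hxy
  obtain ⟨q, hq⟩ := hyz
  exact ⟨p.append q, fun v hv => (Walk.mem_support_append_iff p q).1 hv |>.elim (hp v) (hq v)⟩

theorem mono (h : ConnIn G S x y) (hS : S ⊆ S') : ConnIn G S' x y := by
  obtain ⟨p, hp⟩ := h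
  exact ⟨p, fun v hv => hS (hp v hv)⟩

end ConnIn

namespace SimpleGraph

variable {V : Type u} {G : SimpleGraph V}

theorem Walk.IsPath.eq_of_mem_support_takeUntil_of_mem_support_dropUntil [DecidableEq V]
    {x y w a : V} {p : G.Walk x y} (hp : p.IsPath) (hw : w ∈ p.support)
    (ha : a ∈ (p.takeUntil w hw).support) (ha' : a ∈ (p.dropUntil w hw).support) : a = w := by
  have hnd := hp.support_nodup
  rw [← p.take_spec hw, Walk.support_append] at hnd
  rw [← Walk.cons_tail_support, List.mem_cons] at ha'
  exact ha'.resolve_right (List.disjoint_of_nodup_append hnd ha)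

theorem Walk.IsPath.connIn_takeUntil [DecidableEq V] {x y v : V} {S : Set V} {p : G.Walk x y}
    (hp : p.IsPath) (hS : ∀ w ∈ p.support, w ≠ y → w ∈ S) (hv : v ∈ p.support) (hvy : v ≠ y) :
    ConnIn G S x v :=
  ⟨p.takeUntil v hv, fun w hw => hS w (p.support_takeUntil_subset_support hv hw) fun hwy =>
    Walk.endpoint_notMem_support_takeUntil hp hv hvy.symm (hwy ▸ hw)⟩

theorem IsAcyclic.eq_of_connIn_compl {T : SimpleGraph V} (hT : T.IsAcyclic) {t s s' : V}
    (hs : T.Adj t s) (hs' : T.Adj t s') (h : ConnIn T {t}ᶜ s s') : s = s' := by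
  classical
  by_contra hne
  obtain ⟨p, hp⟩ := h
  have hpath : (Walk.cons hs.symm (Walk.cons hs' .nil)).IsPath := by
    simp [Walk.isPath_def, hs.ne', hne, hs'.ne]
  have hpq : p.bypass = _ := congrArg Subtype.val <|
    (hT.subsingleton_path s s').elim ⟨p.bypass, p.bypass_isPath⟩ ⟨_, hpath⟩
  exact hp t (p.support_bypass_subset_support (by rw [hpq]; simp)) rfl

end SimpleGraph

namespace Desc

variable {ι : Type u} {T : SimpleGraph ι} {r t s u : ι}

theorem exists_isChild (h : Desc T r t u) (hut : u ≠ t) :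
    ∃ s, IsChild T r t s ∧ Desc T r s u := by
  classical
  obtain ⟨p, hp, htp⟩ := h
  obtain ⟨s, hts, q, hq⟩ := Walk.exists_eq_cons_of_ne hut.symm (p.dropUntil t htp)
  have hs_drop : s ∈ (p.dropUntil t htp).support := by simp [hq]
  have hs_take : s ∉ (p.takeUntil t htp).support := fun hs =>
    hts.ne.symm (hp.eq_of_mem_support_takeUntil_of_mem_support_dropUntil htp hs hs_drop)
  refine ⟨s, ⟨hts, (p.takeUntil t htp).concat hts, (hp.takeUntil htp).concat hs_take hts, ?_⟩,
    p, hp, p.support_dropUntil_subset_support htp hs_drop⟩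
  simp [Walk.support_concat]

theorem connIn_compl (hT : T.IsAcyclic) (hs : IsChild T r t s) (h : Desc T r s u) :
    ConnIn T {t}ᶜ s u := by
  classical
  obtain ⟨hts, p₀, hp₀, htp₀⟩ := hs
  obtain ⟨p, hp, hsp⟩ := h
  have hpre : p.takeUntil s hsp = p₀ := congrArg Subtype.val <|
    (hT.subsingleton_path r s).elim ⟨_, hp.takeUntil hsp⟩ ⟨p₀, hp₀⟩
  refine ⟨p.dropUntil s hsp, fun v hv (hvt : v = t) => hts.ne ?_⟩
  subst hvt
  exact hp.eq_of_mem_support_takeUntil_of_mem_support_dropUntil hsp (hpre ▸ htp₀) hv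

end Desc

theorem exists_isChild_mem_unionBags {V ι : Type u} {T : SimpleGraph ι} {B : ι → Set V}
    {r t : ι} {v : V} (hv : v ∈ unionBags B (descSet T r t)) (hvt : v ∉ B t) :
    ∃ s, IsChild T r t s ∧ v ∈ unionBags B (descSet T r s) := by
  simp only [unionBags, Set.mem_iUnion] at hv ⊢
  obtain ⟨u, hu, hvu⟩ := hv
  obtain ⟨s, hs, hsu⟩ := Desc.exists_isChild hu fun hut => hvt (hut ▸ hvu)
  exact ⟨s, hs, u, hsu, hvu⟩

namespace TreeDecomp

variable {V ι : Type u} {G : SimpleGraph V} {T : SimpleGraph ι} (td : TreeDecomp G T)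

theorem connIn_bags_mem {v : V} {u u' : ι} (hu : v ∈ td.bag u) (hu' : v ∈ td.bag u') :
    ConnIn T {w | v ∈ td.bag w} u u' := by
  classical
  obtain ⟨p⟩ := td.isTree.connected.preconnected u u'
  exact ⟨p.bypass, fun w hw => td.bag_sep p.bypass p.bypass_isPath w hw ⟨hu, hu'⟩⟩

theorem connIn_compl_of_connIn_compl {t : ι} {a b : V} (hab : ConnIn G (td.bag t)ᶜ a b)
    {u u' : ι} (hu : a ∈ td.bag u) (hu' : b ∈ td.bag u') : ConnIn T {t}ᶜ u u' := by
  obtain ⟨p, hp⟩ := hab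
  induction p generalizing u with
  | nil =>
    refine (td.connIn_bags_mem hu hu').mono fun w hw (hwt : w = t) => hp _ ?_ (hwt ▸ hw)
    simp
  | cons hac q ih =>
    obtain ⟨w, haw, hcw⟩ := td.exists_bag_adj hac
    have hmove : ConnIn T {t}ᶜ u w :=
      (td.connIn_bags_mem hu haw).mono fun w' hw' (hw't : w' = t) =>
        hp _ (Walk.start_mem_support _) (hw't ▸ hw')
    exact hmove.trans (ih hcw hu' fun v hv => hp v (List.mem_cons_of_mem _ hv))

theorem isChild_eq_of_connIn_compl {r t s s' : ι} {a b : V} (hs : IsChild T r t s)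
    (hs' : IsChild T r t s') (ha : a ∈ unionBags td.bag (descSet T r s))
    (hb : b ∈ unionBags td.bag (descSet T r s')) (hab : ConnIn G (td.bag t)ᶜ a b) : s = s' := by
  have hT := td.isTree.isAcyclic
  simp only [unionBags, Set.mem_iUnion] at ha hb
  obtain ⟨u, hu, hau⟩ := ha
  obtain ⟨u', hu', hbu'⟩ := hb
  exact hT.eq_of_connIn_compl hs.1 hs'.1 <| (Desc.connIn_compl hT hs hu).trans <|
    (td.connIn_compl_of_connIn_compl hab hau hbu').trans (Desc.connIn_compl hT hs' hu').symm

end TreeDecomp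

namespace IsAdmissible

variable {V ι : Type u} {G : SimpleGraph V} {T : SimpleGraph ι} {B : ι → Set V} {r t : ι}
  {x y : V} {P : G.Walk x y}

theorem eq_or_eq_of_mem_bag (hP : IsAdmissible G T B r t P) {v : V} (hv : v ∈ P.support)
    (hvt : v ∈ B t) : v = x ∨ v = y := by
  classical
  by_contra! hne
  have hxv : ConnIn G (B t) x v := by
    by_contra h
    exact (P.length_takeUntil_lt_length hv hne.2).not_ge <|
      hP.minimal _ (hP.isPath.takeUntil hv)
        (fun w hw => hP.support_sub w (P.support_takeUntil_subset_support hv hw))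
        hP.fst_mem hvt h
  have hvy : ConnIn G (B t) v y := by
    by_contra h
    exact (P.length_dropUntil_lt_length hv hne.1).not_ge <|
      hP.minimal _ (hP.isPath.dropUntil hv)
        (fun w hw => hP.support_sub w (P.support_dropUntil_subset_support hv hw))
        hvt hP.snd_mem h
  exact hP.not_conn (hxv.trans hvy)

theorem notMem_bag (hP : IsAdmissible G T B r t P) {v : V} (hv : v ∈ P.support) (hvx : v ≠ x)
    (hvy : v ≠ y) : v ∉ B t := fun hvt =>
  (hP.eq_or_eq_of_mem_bag hv hvt).elim hvx hvy

theorem exists_inner_connIn_compl (hP : IsAdmissible G T B r t P) :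
    ∃ b ∈ P.support, b ≠ x ∧ b ≠ y ∧
      ∀ v ∈ P.support, v ≠ x → v ≠ y → ConnIn G (B t)ᶜ b v := by
  classical
  cases P with
  | nil => exact absurd (ConnIn.refl hP.fst_mem) hP.not_conn
  | @cons _ b _ hxb Q =>
    obtain ⟨hQ, hxQ⟩ := (Walk.cons_isPath_iff hxb Q).1 hP.isPath
    have hby : b ≠ y := by
      rintro rfl
      rw [(Walk.isPath_iff_nil.1 hQ).eq_nil] at hP
      exact hP.not_conn (ConnIn.of_adj hxb hP.fst_mem hP.snd_mem)
    have hbx : b ≠ x := fun h => hxQ (h ▸ Q.start_mem_support)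
    refine ⟨b, by simp, hbx, hby, fun v hv hvx hvy => ?_⟩
    have hvQ : v ∈ Q.support := (List.mem_cons.1 hv).resolve_left hvx
    refine hQ.connIn_takeUntil (fun w hw hwy => ?_) hvQ hvy
    exact hP.notMem_bag (List.mem_cons_of_mem _ hw) (fun h => hxQ (h ▸ hw)) hwy

end IsAdmissible

/-- a `t`-admissible path has exactly two vertices in `V_t`
(its endpoints), and there is a unique child `s` of `t` such that all its
internal vertices lie in `V_{T_s} \ V_t`. -/
theorem admissible_path_shape {V ι : Type u} (G : SimpleGraph V) (T : SimpleGraph ι)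
    (td : TreeDecomp G T) (r t : ι) {x y : V} (P : G.Walk x y)
    (hP : IsAdmissible G T td.bag r t P) :
    (∀ v ∈ P.support, v ∈ td.bag t → v = x ∨ v = y) ∧
    ∃! s : ι, IsChild T r t s ∧
      ∀ v ∈ P.support, v ≠ x → v ≠ y →
        v ∈ unionBags td.bag (descSet T r s) ∧ v ∉ td.bag t := by
  obtain ⟨b, hb, hbx, hby, hconn⟩ := hP.exists_inner_connIn_compl
  obtain ⟨s, hs, hbs⟩ :=
    exists_isChild_mem_unionBags (hP.support_sub b hb) (hP.notMem_bag hb hbx hby)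
  refine ⟨fun v hv => hP.eq_or_eq_of_mem_bag hv, s,
    ⟨hs, fun v hv hvx hvy => ⟨?_, hP.notMem_bag hv hvx hvy⟩⟩, ?_⟩
  · obtain ⟨s', hs', hvs'⟩ :=
      exists_isChild_mem_unionBags (hP.support_sub v hv) (hP.notMem_bag hv hvx hvy)
    rwa [td.isChild_eq_of_connIn_compl hs hs' hbs hvs' (hconn v hv hvx hvy)]
  · rintro s' ⟨hs', hP'⟩
    exact (td.isChild_eq_of_connIn_compl hs hs' hbs (hP' b hb hbx hby).1
      (ConnIn.refl (hP.notMem_bag hb hbx hby))).symm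
end

section
/- Let (T, V) be a rooted stable tree-decomposition of a connected graph G. Then for every node t of T such that the induced subgraph G[V_t] is disconnected, there exists a t-admissible path, i.e., a path in G contained in V_{T_t} joining two distinct components of G[V_t] that is shortest with these properties. -/
open SimpleGraph

universe u

/-!
Any two vertices of the bag `V_t` are joined by a walk inside `V_{T_t}`: if `t` is the root
this is the connectivity of `G`, and otherwise `V_{T_t}` contains the union of the bags on the
side of `t` of the edge joining `t` to its parent, which is connected by stability. Hence some
path inside `V_{T_t}` joins two components of `G[V_t]`, and one of minimal length is admissible.
-/

namespace SimpleGraph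

variable {V ι : Type u} {G : SimpleGraph V} {T : SimpleGraph ι}

lemma exists_walk_minimal_length {P : ∀ {x y : V}, G.Walk x y → Prop}
    (h : ∃ (x y : V) (W : G.Walk x y), P W) :
    ∃ (x y : V) (W : G.Walk x y), P W ∧
      ∀ (x' y' : V) (W' : G.Walk x' y'), P W' → W.length ≤ W'.length := by
  classical
  have hlen : ∃ n, ∃ (x y : V) (W : G.Walk x y), P W ∧ W.length = n :=
    let ⟨x, y, W, hW⟩ := h; ⟨W.length, x, y, W, hW, rfl⟩
  obtain ⟨x, y, W, hW, hWn⟩ := Nat.find_spec hlen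
  exact ⟨x, y, W, hW, fun x' y' W' hW' => hWn ▸ Nat.find_min' hlen ⟨x', y', W', hW', rfl⟩⟩

lemma IsAcyclic.isPath_append_cons (hT : T.IsAcyclic) {r t' t s : ι} {w : T.Walk r t'}
    (hw : w.IsPath) (ht : t ∉ w.support) (h : T.Adj t' t) {p : T.Walk t s}
    (hp : p.IsPath) (ht' : t' ∉ p.support) : (w.append (.cons h p)).IsPath := by
  classical
  rw [Walk.isPath_def, Walk.support_append, Walk.support_cons, List.tail_cons,
    List.nodup_append]
  refine ⟨hw.support_nodup, hp.support_nodup, fun u huw v hvp huv => ?_⟩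
  subst huv
  have hback : (p.takeUntil u hvp).reverse.IsPath := (hp.takeUntil hvp).reverse
  have ht'back : t' ∉ (p.takeUntil u hvp).reverse.support := by
    rw [Walk.support_reverse, List.mem_reverse]
    exact fun h' => ht' (p.support_takeUntil_subset_support hvp h')
  have htw := hT.mem_support_of_ne_mem_support_of_adj_of_isPath (hw.dropUntil huw) hback h
    ht'back
  exact ht (w.support_dropUntil_subset_support huw htw)

lemma Preconnected.exists_isPath_adj_of_ne (hT : T.Preconnected) {r t : ι} (hrt : r ≠ t) :
    ∃ (t' : ι) (w : T.Walk r t') (_ : T.Adj t' t), w.IsPath ∧ t ∉ w.support := by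
  obtain ⟨q, hq⟩ := (hT t r).exists_isPath
  cases q with
  | nil => exact absurd rfl hrt
  | cons h p =>
    rw [Walk.cons_isPath_iff] at hq
    exact ⟨_, p.reverse, h.symm, hq.1.reverse, by simpa using hq.2⟩

end SimpleGraph

section

variable {V ι : Type u} {G : SimpleGraph V} {T : SimpleGraph ι}

lemma ConnIn.mono_s1 {S S' : Set V} {x y : V} (hSS' : S ⊆ S') (h : ConnIn G S x y) :
    ConnIn G S' x y :=
  let ⟨W, hW⟩ := h; ⟨W, fun v hv => hSS' (hW v hv)⟩

lemma desc_self_of_reachable {r s : ι} (h : T.Reachable r s) : Desc T r r s :=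
  let ⟨q, hq⟩ := h.exists_isPath; ⟨q, hq, q.start_mem_support⟩

lemma mem_side_self {t t' : ι} (h : T.Adj t' t) : t ∈ Side T t t' :=
  ⟨.nil, .nil, by simpa using h.ne⟩

/-- `w.concat h` is the path from the root `r` to `t`, so `t'` is the parent of `t`. -/
lemma side_subset_descSet (hT : T.IsAcyclic) {r t' t : ι} {w : T.Walk r t'} (hw : w.IsPath)
    (ht : t ∉ w.support) (h : T.Adj t' t) : Side T t t' ⊆ descSet T r t := by
  rintro s ⟨p, hp, ht'p⟩
  refine ⟨w.append (.cons h p.reverse), hT.isPath_append_cons hw ht h hp.reverse ?_, by simp⟩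
  rwa [Walk.support_reverse, List.mem_reverse]

namespace TreeDecomp

lemma mem_unionBags_descSet_self (td : TreeDecomp G T) (r : ι) (v : V) :
    v ∈ unionBags td.bag (descSet T r r) :=
  let ⟨s, hs⟩ := td.exists_bag v
  Set.mem_biUnion (desc_self_of_reachable (td.isTree.connected.preconnected r s)) hs

lemma connIn_unionBags_descSet (td : TreeDecomp G T) (hG : G.Connected) (hst : td.Stable)
    (r t : ι) {x y : V} (hx : x ∈ td.bag t) (hy : y ∈ td.bag t) :
    ConnIn G (unionBags td.bag (descSet T r t)) x y := by
  by_cases hrt : r = t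
  · subst hrt
    obtain ⟨W⟩ := hG.preconnected x y
    exact ⟨W, fun v _ => td.mem_unionBags_descSet_self r v⟩
  · obtain ⟨t', w, h, hw, ht⟩ := td.isTree.connected.preconnected.exists_isPath_adj_of_ne hrt
    have hside : unionBags td.bag (Side T t t') ⊆ unionBags td.bag (descSet T r t) :=
      Set.biUnion_subset_biUnion_left (side_subset_descSet td.isTree.isAcyclic hw ht h)
    have htS := mem_side_self h
    exact ((hst h.symm).2 x (Set.mem_biUnion htS hx) y (Set.mem_biUnion htS hy)).mono_s1 hside

end TreeDecomp

end

/-- in a rooted stable tree-decomposition of a connected graph,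
every node with disconnected bag has an admissible path. -/
theorem exists_admissible_path {V ι : Type u} (G : SimpleGraph V) (hG : G.Connected)
    (T : SimpleGraph ι) (td : TreeDecomp G T) (hst : td.Stable) (r t : ι)
    (hdis : ∃ x ∈ td.bag t, ∃ y ∈ td.bag t, ¬ ConnIn G (td.bag t) x y) :
    ∃ (x y : V) (P : G.Walk x y), IsAdmissible G T td.bag r t P := by
  classical
  set S := unionBags td.bag (descSet T r t)
  obtain ⟨x, hx, y, hy, hxy⟩ := hdis
  obtain ⟨W, hWS⟩ := td.connIn_unionBags_descSet hG hst r t hx hy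
  obtain ⟨x₀, y₀, P, ⟨hP, hPS, hx₀, hy₀, hx₀y₀⟩, hmin⟩ :=
    exists_walk_minimal_length (P := fun {x y} (Q : G.Walk x y) => Q.IsPath ∧
      (∀ v ∈ Q.support, v ∈ S) ∧ x ∈ td.bag t ∧ y ∈ td.bag t ∧ ¬ ConnIn G (td.bag t) x y)
      ⟨x, y, W.bypass, W.bypass_isPath, fun v hv => hWS v (W.support_bypass_subset_support hv),
        hx, hy, hxy⟩
  exact ⟨x₀, y₀, P, hP, hPS, hx₀, hy₀, hx₀y₀,
    fun x' y' Q hQ hQS hx' hy' hx'y' => hmin x' y' Q ⟨hQ, hQS, hx', hy', hx'y'⟩⟩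
end

section
/- Let (T, V) be a rooted tree-decomposition of a graph G, t a node of T, and P a t-admissible path. Define W_u := V_u ∪ (V(P) ∩ V_{T_u}) for u a descendant of t, and W_u := V_u otherwise. Then (T, (W_u)_{u in T}) is a tree-decomposition of G. -/
open SimpleGraph

universe u

section Aux

variable {ι : Type u} {T : SimpleGraph ι}

/-- Uniqueness of paths in a tree. -/
lemma tree_path_unique (hT : T.IsTree) {a b : ι} {p q : T.Walk a b}
    (hp : p.IsPath) (hq : q.IsPath) : p = q :=
  (hT.existsUnique_path a b).unique hp hq

/-- In a tree, the path from `a` to `b` is contained in any walk from `a` to `b`. -/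
lemma tree_path_support_subset (hT : T.IsTree) {a b : ι} {p : T.Walk a b}
    (hp : p.IsPath) (q : T.Walk a b) : p.support ⊆ q.support := by
  classical
  have : p = q.bypass := tree_path_unique hT hp q.bypass_isPath
  rw [this]
  exact q.support_bypass_subset

/-- If `b` is a descendant of `a` and `u` lies on the `a`–`b` path, then
`u` is a descendant of `a` and `b` is a descendant of `u`. -/
lemma desc_of_mem_path (hT : T.IsTree) {r a b u : ι} (h : Desc T r a b)
    {p : T.Walk a b} (hp : p.IsPath) (hu : u ∈ p.support) :
    Desc T r a u ∧ Desc T r u b := by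
  classical
  obtain ⟨q, hq, haq⟩ := h
  have hdrop : q.dropUntil a haq = p := tree_path_unique hT (hq.dropUntil haq) hp
  constructor
  · refine ⟨(q.takeUntil a haq).append (p.takeUntil u hu), ?_, ?_⟩
    · have hh : ((q.takeUntil a haq).append (p.takeUntil u hu)).append (p.dropUntil u hu)
          = q := by
        rw [← SimpleGraph.Walk.append_assoc, SimpleGraph.Walk.take_spec p hu, ← hdrop,
          SimpleGraph.Walk.take_spec]
      have hq' := hq
      rw [← hh] at hq'
      exact hq'.of_append_left
    · rw [SimpleGraph.Walk.mem_support_append_iff]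
      exact Or.inl (SimpleGraph.Walk.end_mem_support _)
  · refine ⟨q, hq, ?_⟩
    have : u ∈ (q.dropUntil a haq).support := by rw [hdrop]; exact hu
    exact q.support_dropUntil_subset haq this

/-- Transitivity of the descendant relation. -/
lemma desc_trans (hT : T.IsTree) {r a b c : ι} (h1 : Desc T r a b)
    (h2 : Desc T r b c) : Desc T r a c := by
  classical
  obtain ⟨p, hp, hap⟩ := h1
  obtain ⟨q, hq, hbq⟩ := h2
  have he : p = q.takeUntil b hbq := tree_path_unique hT hp (hq.takeUntil hbq)
  refine ⟨q, hq, q.support_takeUntil_subset hbq ?_⟩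
  rw [← he]; exact hap

variable {V : Type u} {G : SimpleGraph V}

/-- The side case of the separation property for the updated bags. -/
lemma side_case (hT : T.IsTree) {B : ι → Set V} {r t t₁ s₁ t₂ : ι} {v : V}
    {x y : V} {P : G.Walk x y}
    (hvs₁ : v ∈ B s₁) (hvP : v ∈ P.support)
    (h₁ : s₁ = t₁ ∨ (Desc T r t t₁ ∧ Desc T r t₁ s₁))
    {q : T.Walk t₁ s₁} (hq : q.IsPath) (ht₂ : t₂ ∈ q.support) :
    v ∈ updatedBag T B r t P t₂ := by
  rcases h₁ with rfl | ⟨hd, hd'⟩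
  · have hnil : q = SimpleGraph.Walk.nil :=
      tree_path_unique hT hq SimpleGraph.Walk.IsPath.nil
    rw [hnil] at ht₂
    simp only [SimpleGraph.Walk.support_nil, List.mem_singleton] at ht₂
    subst ht₂
    exact Or.inl hvs₁
  · obtain ⟨hd₁, hd₂⟩ := desc_of_mem_path hT hd' hq ht₂
    exact Or.inr ⟨desc_trans hT hd hd₁, hvP, Set.mem_biUnion hd₂ hvs₁⟩

/-- The key separation step for the updated bags. -/
lemma key_step {V ι : Type u} {G : SimpleGraph V} {T : SimpleGraph ι}
    (td : TreeDecomp G T) (r t : ι) {x y : V} (P : G.Walk x y)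
    {t₁ t₃ : ι} {p : T.Walk t₁ t₃} (hp : p.IsPath)
    {t₂ : ι} (ht₂ : t₂ ∈ p.support) {v : V} (hvP : v ∈ P.support)
    {s₁ s₃ : ι} (hvs₁ : v ∈ td.bag s₁) (hvs₃ : v ∈ td.bag s₃)
    (h₁ : s₁ = t₁ ∨ (Desc T r t t₁ ∧ Desc T r t₁ s₁))
    (h₃ : s₃ = t₃ ∨ (Desc T r t t₃ ∧ Desc T r t₃ s₃)) :
    v ∈ updatedBag T td.bag r t P t₂ := by
  have hT := td.isTree
  obtain ⟨p₁, hp₁, -⟩ := hT.existsUnique_path t₁ s₁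
  obtain ⟨p₂, hp₂, -⟩ := hT.existsUnique_path s₁ s₃
  obtain ⟨p₃, hp₃, -⟩ := hT.existsUnique_path s₃ t₃
  have ht₂' : t₂ ∈ (p₁.append (p₂.append p₃)).support :=
    tree_path_support_subset hT hp (p₁.append (p₂.append p₃)) ht₂
  rw [SimpleGraph.Walk.mem_support_append_iff,
    SimpleGraph.Walk.mem_support_append_iff] at ht₂'
  rcases ht₂' with h | h | h
  · exact side_case hT hvs₁ hvP h₁ hp₁ h
  · exact Or.inl (td.bag_sep p₂ hp₂ t₂ h ⟨hvs₁, hvs₃⟩)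
  · refine side_case hT hvs₃ hvP h₃ hp₃.reverse ?_
    rw [SimpleGraph.Walk.support_reverse, List.mem_reverse]
    exact h

end Aux

/-- adding an admissible path as in `(*)` yields again a
tree-decomposition. -/
theorem updated_is_treeDecomp {V ι : Type u} (G : SimpleGraph V) (T : SimpleGraph ι)
    (td : TreeDecomp G T) (r t : ι) {x y : V} (P : G.Walk x y)
    (hP : IsAdmissible G T td.bag r t P) :
    ∃ td' : TreeDecomp G T, td'.bag = updatedBag T td.bag r t P := by
  refine ⟨{ isTree := td.isTree
            bag := updatedBag T td.bag r t P
            exists_bag := fun v => (td.exists_bag v).imp fun u hv => Or.inl hv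
            exists_bag_adj := fun u v h =>
              (td.exists_bag_adj h).imp fun u' hv => ⟨Or.inl hv.1, Or.inl hv.2⟩
            bag_sep := ?_ }, rfl⟩
  intro t₁ t₃ p hp t₂ ht₂ v hv
  obtain ⟨hv1, hv3⟩ := hv
  -- extract the data from membership in the updated bags
  rcases hv1 with hv1 | ⟨hd1, hvP, hu1⟩
  · rcases hv3 with hv3 | ⟨hd3, hvP, hu3⟩
    · exact Or.inl (td.bag_sep p hp t₂ ht₂ ⟨hv1, hv3⟩)
    · obtain ⟨s₃, hds₃, hvs₃⟩ := Set.mem_iUnion₂.mp hu3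
      exact key_step td r t P hp ht₂ hvP hv1 hvs₃ (Or.inl rfl) (Or.inr ⟨hd3, hds₃⟩)
  · obtain ⟨s₁, hds₁, hvs₁⟩ := Set.mem_iUnion₂.mp hu1
    rcases hv3 with hv3 | ⟨hd3, hvP', hu3⟩
    · exact key_step td r t P hp ht₂ hvP hvs₁ hv3 (Or.inr ⟨hd1, hds₁⟩) (Or.inl rfl)
    · obtain ⟨s₃, hds₃, hvs₃⟩ := Set.mem_iUnion₂.mp hu3
      exact key_step td r t P hp ht₂ hvP hvs₁ hvs₃ (Or.inr ⟨hd1, hds₁⟩)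
        (Or.inr ⟨hd3, hds₃⟩)
end

section
/- Let (T, V) be a rooted tree-decomposition of a graph G, t a node of T, P a t-admissible path, and define W_u := V_u ∪ (V(P) ∩ V_{T_u}) for u a descendant of t and W_u := V_u otherwise. Then for every node u of T, every connected component of the induced subgraph G[W_u] contains a vertex of V_u. -/
open SimpleGraph

universe u

/-!
A vertex `w` of `W_u` outside `V_u` lies on `P` and in `V_{T_u}`. Walk from `w` along `P` back
to its end `x ∈ V_t`. An edge leaving `V_{T_u}` starts in `V_u`, and `V_t ∩ V_{T_u} ⊆ V_u`
because `u` separates `t` from the rest of `T_u`; so the walk meets `V_u` before it first leaves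
`V_{T_u}`, and up to that point it stays in `V(P) ∩ V_{T_u} ⊆ W_u`.
-/

namespace ConnIn

variable {V : Type u} {G : SimpleGraph V} {S : Set V} {a b c : V}

theorem refl_s3 (ha : a ∈ S) : ConnIn G S a a :=
  ⟨.nil, by simpa using ha⟩

theorem cons (hab : G.Adj a b) (ha : a ∈ S) : ConnIn G S b c → ConnIn G S a c
  | ⟨p, hp⟩ => ⟨.cons hab p, by simpa [ha] using hp⟩

theorem mono_s3 {S' : Set V} (hS : S ⊆ S') : ConnIn G S a b → ConnIn G S' a b
  | ⟨p, hp⟩ => ⟨p, fun v hv => hS (hp v hv)⟩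

end ConnIn

theorem SimpleGraph.Walk.exists_connIn_of_forall_adj_notMem {V : Type u} {G : SimpleGraph V}
    {U B : Set V} (hUB : ∀ ⦃a b⦄, G.Adj a b → a ∈ U → b ∉ U → a ∈ B) :
    ∀ {w z : V} (q : G.Walk w z), w ∈ U → (z ∈ U → z ∈ B) →
      ∃ v ∈ B, ConnIn G {a | a ∈ U ∧ a ∈ q.support} w v
  | _, _, .nil, hw, hz => ⟨_, hz hw, .refl ⟨hw, by simp⟩⟩
  | w, _, .cons (v := w') hww' q, hw, hz => by
    by_cases hw' : w' ∈ U
    · obtain ⟨v, hv, hconn⟩ := exists_connIn_of_forall_adj_notMem hUB q hw' hz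
      refine ⟨v, hv, hconn.mono_s3 ?_ |>.cons hww' ⟨hw, by simp⟩⟩
      rintro a ⟨haU, haq⟩
      exact ⟨haU, by simp [haq]⟩
    · exact ⟨w, hUB hww' hw hw', .refl ⟨hw, by simp⟩⟩

section RootedTree

variable {ι : Type u} {T : SimpleGraph ι} {r t u s s' : ι}

theorem Desc.antisymm (hT : T.IsTree) (htu : Desc T r t u) (hut : Desc T r u t) : t = u := by
  classical
  obtain ⟨pu, hpu, ht⟩ := htu
  obtain ⟨pt, hpt, hu⟩ := hut
  have hpt_eq : pu.takeUntil t ht = pt := (hT.existsUnique_path r t).unique (hpu.takeUntil ht) hpt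
  by_contra hne
  exact Walk.endpoint_notMem_support_takeUntil hpu ht (Ne.symm hne) (hpt_eq ▸ hu)

theorem mem_support_of_desc_of_not_desc (hT : T.IsTree) (hs : Desc T r u s)
    (hs' : ¬ Desc T r u s') (q : T.Walk s' s) : u ∈ q.support := by
  classical
  obtain ⟨p, hp, hu⟩ := hs
  obtain ⟨p'⟩ := hT.connected.preconnected r s'
  have hp_eq : (p'.bypass.append q).bypass = p :=
    (hT.existsUnique_path r s).unique (p'.bypass.append q).bypass_isPath hp
  have hu' := (p'.bypass.append q).support_bypass_subset_support (hp_eq ▸ hu)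
  rcases Walk.mem_support_append_iff _ _ |>.mp hu' with hu' | hu'
  · exact absurd ⟨p'.bypass, p'.bypass_isPath, hu'⟩ hs'
  · exact hu'

end RootedTree

namespace TreeDecomp

variable {V ι : Type u} {G : SimpleGraph V} {T : SimpleGraph ι} (td : TreeDecomp G T)
  {r t u s s' : ι} {a b : V}

theorem mem_bag_of_desc_of_not_desc (hs : Desc T r u s) (hs' : ¬ Desc T r u s')
    (ha : a ∈ td.bag s) (ha' : a ∈ td.bag s') : a ∈ td.bag u := by
  classical
  obtain ⟨q⟩ := td.isTree.connected.preconnected s' s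
  exact td.bag_sep q.bypass q.bypass_isPath u
    (mem_support_of_desc_of_not_desc td.isTree hs hs' q.bypass) ⟨ha', ha⟩

theorem mem_bag_of_adj_of_notMem_unionBags (hab : G.Adj a b)
    (ha : a ∈ unionBags td.bag (descSet T r u)) (hb : b ∉ unionBags td.bag (descSet T r u)) :
    a ∈ td.bag u := by
  obtain ⟨s, hs, has⟩ := Set.mem_iUnion₂.mp ha
  obtain ⟨s', has', hbs'⟩ := td.exists_bag_adj hab
  have hs' : ¬ Desc T r u s' := fun hs' => hb (Set.mem_iUnion₂.mpr ⟨s', hs', hbs'⟩)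
  exact td.mem_bag_of_desc_of_not_desc hs hs' has has'

theorem mem_bag_of_desc_of_mem_unionBags (htu : Desc T r t u) (ht : a ∈ td.bag t)
    (ha : a ∈ unionBags td.bag (descSet T r u)) : a ∈ td.bag u := by
  by_cases hut : Desc T r u t
  · exact Desc.antisymm td.isTree htu hut ▸ ht
  · obtain ⟨s, hs, has⟩ := Set.mem_iUnion₂.mp ha
    exact td.mem_bag_of_desc_of_not_desc hs hut has ht

end TreeDecomp

/-- after adding an admissible path as in `(*)`, every component
of `G[W_u]` contains a vertex of `V_u`. -/
theorem updated_components_meet_bag {V ι : Type u} (G : SimpleGraph V)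
    (T : SimpleGraph ι) (td : TreeDecomp G T) (r t : ι) {x y : V} (P : G.Walk x y)
    (hP : IsAdmissible G T td.bag r t P) :
    ∀ u : ι, ∀ w ∈ updatedBag T td.bag r t P u,
      ∃ v ∈ td.bag u, ConnIn G (updatedBag T td.bag r t P u) w v := by
  classical
  rintro u w (hw | ⟨htu, hwP, hwU⟩)
  · exact ⟨w, hw, .refl (Or.inl hw)⟩
  · obtain ⟨v, hv, hconn⟩ := (P.takeUntil w hwP).reverse.exists_connIn_of_forall_adj_notMem
      (fun _ _ => td.mem_bag_of_adj_of_notMem_unionBags) hwU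
      (td.mem_bag_of_desc_of_mem_unionBags htu hP.fst_mem)
    refine ⟨v, hv, hconn.mono_s3 ?_⟩
    rintro a ⟨haU, haq⟩
    rw [Walk.support_reverse, List.mem_reverse] at haq
    exact Or.inr ⟨htu, P.support_takeUntil_subset_support hwP haq, haU⟩
end

section
/- Suppose (T, V) is a tree-decomposition of a graph G and k an integer such that for every node t of T there is a connected vertex set of size at most k + 1 containing V_t. Then every bramble of G can be covered by a connected vertex set of size at most k + 1; i.e., G has no bramble of connected order greater than k + 1. -/
open SimpleGraph

universe u

/-!
If no bag meets every element of the bramble, every node `t` has an element `S t` avoiding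
`V_t`; being connected, `S t` lies beyond one edge `t t'` at `t`, which defines `f t = t'`.
The sets `S t` and `S t'` touch, so they cannot lie on opposite sides of the same edge:
hence `f (f t) ≠ t`, and the orbit of any node under `f` is a non-backtracking walk in the
tree, i.e. a path, and so never repeats a node. But each step of `f` heads towards one of the
finitely many nodes `home v` whose bags contain the vertices `v` of `G`, so the orbit stays in
the finite subtree they span together with its start. Thus some bag meets every element of
the bramble, and a connected set of size at most `k + 1` containing it covers the bramble.
-/

namespace SimpleGraph

variable {ι : Type u} {T : SimpleGraph ι}

theorem IsAcyclic.support_subset_support_of_isPath (hT : T.IsAcyclic) {u v : ι}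
    {p : T.Walk u v} (hp : p.IsPath) (q : T.Walk u v) : p.support ⊆ q.support := by
  classical
  have hpq : p = q.bypass :=
    congrArg Subtype.val ((hT.subsingleton_path u v).elim ⟨p, hp⟩ ⟨q.bypass, q.bypass_isPath⟩)
  rw [hpq]
  exact q.support_bypass_subset_support

def iterateWalk {f : ι → ι} (hf : ∀ t, T.Adj t (f t)) (t₀ : ι) :
    (n : ℕ) → T.Walk t₀ (f^[n] t₀)
  | 0 => Walk.nil
  | n + 1 => (iterateWalk hf t₀ n).concat (by rw [Function.iterate_succ_apply']; exact hf _)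

theorem iterate_mem_support_iterateWalk {f : ι → ι} (hf : ∀ t, T.Adj t (f t)) (t₀ : ι)
    {m n : ℕ} (hmn : m ≤ n) : f^[m] t₀ ∈ (iterateWalk hf t₀ n).support := by
  induction n with
  | zero => simp [Nat.le_zero.mp hmn, iterateWalk]
  | succ n ih =>
    rw [iterateWalk, Walk.support_concat]
    rcases hmn.lt_or_eq with hlt | rfl
    · exact List.mem_append_left _ (ih (Nat.le_of_lt_succ hlt))
    · exact List.mem_append_right _ (List.mem_singleton_self _)

theorem IsAcyclic.isPath_iterateWalk (hT : T.IsAcyclic) {f : ι → ι} (hf : ∀ t, T.Adj t (f t))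
    (hback : ∀ t, f (f t) ≠ t) (t₀ : ι) (n : ℕ) : (iterateWalk hf t₀ n).IsPath := by
  induction n with
  | zero => exact Walk.IsPath.nil
  | succ n ih =>
    refine ih.concat (fun hmem => ?_) _
    have hpen := hT.eq_penultimate_of_adj_end ih
      (by rw [Function.iterate_succ_apply']; exact hf _) hmem
    cases n with
    | zero => exact (hf t₀).ne' (by simpa [iterateWalk] using hpen)
    | succ m =>
      have hpen' : (iterateWalk hf t₀ (m + 1)).penultimate = f^[m] t₀ :=
        Walk.penultimate_concat _ _
      rw [hpen', Function.iterate_succ_apply', Function.iterate_succ_apply'] at hpen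
      exact hback _ hpen

theorem IsAcyclic.iterate_injective (hT : T.IsAcyclic) {f : ι → ι} (hf : ∀ t, T.Adj t (f t))
    (hback : ∀ t, f (f t) ≠ t) (t₀ : ι) : Function.Injective fun n => f^[n] t₀ := by
  refine .of_lt_imp_ne fun m n hmn heq => ?_
  obtain ⟨k, rfl⟩ := Nat.exists_eq_add_of_lt hmn
  have hpath := hT.isPath_iterateWalk hf hback t₀ (m + k + 1)
  rw [iterateWalk, Walk.concat_isPath_iff] at hpath
  exact hpath.2 (heq ▸ iterate_mem_support_iterateWalk hf t₀ (Nat.le_add_right m k))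

theorem IsTree.finite_setOf_desc (hT : T.IsTree) (r a : ι) :
    {t | Desc T r t a}.Finite := by
  obtain ⟨p, hp, huniq⟩ := hT.existsUnique_path r a
  refine p.support.finite_toSet.subset ?_
  rintro t ⟨q, hq, htq⟩
  rwa [huniq q hq] at htq

theorem IsTree.desc_or_desc_of_desc (hT : T.IsTree) {r t s a a' : ι}
    (ht : Desc T r t a') (hs : Desc T t s a) : Desc T r s a ∨ Desc T r s a' := by
  classical
  obtain ⟨p, hp, htp⟩ := ht
  obtain ⟨q, hq, hsq⟩ := hs
  obtain ⟨p', hp', -⟩ := hT.existsUnique_path r a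
  have hsub := hT.isAcyclic.support_subset_support_of_isPath hq
    ((p.takeUntil t htp).reverse.append p') hsq
  rw [Walk.support_append, Walk.support_reverse, List.mem_append, List.mem_reverse] at hsub
  rcases hsub with hs | hs
  · exact Or.inr ⟨p, hp, p.support_takeUntil_subset_support htp hs⟩
  · exact Or.inl ⟨p', hp', List.mem_of_mem_tail hs⟩

theorem IsTree.finite_range_iterate (hT : T.IsTree) {A : Set ι} (hA : A.Finite)
    {f : ι → ι} (hf : ∀ t, ∃ a ∈ A, Desc T t (f t) a) (t₀ : ι) :
    (Set.range fun n => f^[n] t₀).Finite := by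
  refine (hA.biUnion fun a _ => hT.finite_setOf_desc t₀ a).subset ?_
  rintro _ ⟨n, rfl⟩
  simp only [Set.mem_iUnion₂, Set.mem_ofPred_eq]
  induction n with
  | zero =>
    obtain ⟨a, ha, -⟩ := hf t₀
    obtain ⟨p, hp, -⟩ := hT.existsUnique_path t₀ a
    exact ⟨a, ha, p, hp, p.start_mem_support⟩
  | succ n ih =>
    obtain ⟨a', ha', hn⟩ := ih
    obtain ⟨a, ha, hstep⟩ := hf (f^[n] t₀)
    rw [Function.iterate_succ_apply']
    rcases hT.desc_or_desc_of_desc hn hstep with h | h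
    · exact ⟨a, ha, h⟩
    · exact ⟨a', ha', h⟩

theorem mem_side_of_walk {t₁ t₂ u u' : ι} (hu : u ∈ Side T t₁ t₂) (w : T.Walk u' u)
    (hw : t₂ ∉ w.support) : u' ∈ Side T t₁ t₂ := by
  classical
  obtain ⟨p, -, hp⟩ := hu
  refine ⟨(w.append p).bypass, Walk.bypass_isPath _, fun hmem => ?_⟩
  have hmem' := Walk.support_bypass_subset_support _ hmem
  rw [Walk.support_append, List.mem_append] at hmem'
  exact hmem'.elim hw (fun h => hp (List.mem_of_mem_tail h))

theorem IsTree.mem_side_or_mem_side (hT : T.IsTree) {t₁ t₂ : ι} (hadj : T.Adj t₁ t₂)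
    (u : ι) : u ∈ Side T t₁ t₂ ∨ u ∈ Side T t₂ t₁ := by
  obtain ⟨p, hp, -⟩ := hT.existsUnique_path u t₁
  by_cases ht₂ : t₂ ∈ p.support
  · obtain ⟨q, hq, -⟩ := hT.existsUnique_path u t₂
    exact Or.inr ⟨q, hq, hT.isAcyclic.ne_mem_support_of_support_of_adj_of_isPath hp hq hadj ht₂⟩
  · exact Or.inl ⟨p, hp, ht₂⟩

theorem IsAcyclic.notMem_side_of_mem_side (hT : T.IsAcyclic) {t₁ t₂ u : ι}
    (hadj : T.Adj t₁ t₂) (h₁ : u ∈ Side T t₁ t₂) : u ∉ Side T t₂ t₁ := by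
  obtain ⟨p, hp, hp₂⟩ := h₁
  rintro ⟨q, hq, hq₁⟩
  exact hp₂ (hT.mem_support_of_ne_mem_support_of_adj_of_isPath hp hq hadj hq₁)

end SimpleGraph

namespace TreeDecomp

variable {V ι : Type u} {G : SimpleGraph V} {T : SimpleGraph ι} (td : TreeDecomp G T)

theorem mem_bag_inter_of_mem_unionBags_side {t₁ t₂ : ι} (hadj : T.Adj t₁ t₂) {v : V}
    (h₁ : v ∈ unionBags td.bag (Side T t₁ t₂)) (h₂ : v ∈ unionBags td.bag (Side T t₂ t₁)) :
    v ∈ td.bag t₁ ∩ td.bag t₂ := by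
  simp only [unionBags, Set.mem_iUnion₂] at h₁ h₂
  obtain ⟨u₁, hu₁, hv₁⟩ := h₁
  obtain ⟨u₂, hu₂, hv₂⟩ := h₂
  obtain ⟨p, hp, -⟩ := td.isTree.existsUnique_path u₁ u₂
  have hT := td.isTree.isAcyclic
  have ht₁ : t₁ ∈ p.support := by
    by_contra hmem
    exact hT.notMem_side_of_mem_side hadj hu₁ (mem_side_of_walk hu₂ p hmem)
  have ht₂ : t₂ ∈ p.support := by
    by_contra hmem
    exact hT.notMem_side_of_mem_side hadj
      (mem_side_of_walk hu₁ p.reverse (by simpa using hmem)) hu₂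
  exact ⟨td.bag_sep p hp t₁ ht₁ ⟨hv₁, hv₂⟩, td.bag_sep p hp t₂ ht₂ ⟨hv₁, hv₂⟩⟩

theorem mem_unionBags_side_of_walk {t₁ t₂ : ι} (hadj : T.Adj t₁ t₂) {x y : V} (w : G.Walk x y)
    (hw : ∀ v ∈ w.support, v ∉ td.bag t₁ ∩ td.bag t₂)
    (hx : x ∈ unionBags td.bag (Side T t₁ t₂)) : y ∈ unionBags td.bag (Side T t₁ t₂) := by
  induction w with
  | nil => exact hx
  | @cons a b c hab w ih =>
    obtain ⟨u, hua, hub⟩ := td.exists_bag_adj hab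
    rcases td.isTree.mem_side_or_mem_side hadj u with hu | hu
    · exact ih (fun v hv => hw v (List.mem_cons_of_mem _ hv)) (Set.mem_biUnion hu hub)
    · exact absurd (td.mem_bag_inter_of_mem_unionBags_side hadj hx (Set.mem_biUnion hu hua))
        (hw a (Walk.cons hab w).start_mem_support)

theorem subset_unionBags_side_of_isConnSet {t₁ t₂ : ι} (hadj : T.Adj t₁ t₂) {S : Set V}
    (hS : IsConnSet G S) (hdisj : ∀ v ∈ S, v ∉ td.bag t₁ ∩ td.bag t₂) {x : V} (hxS : x ∈ S)
    (hx : x ∈ unionBags td.bag (Side T t₁ t₂)) : S ⊆ unionBags td.bag (Side T t₁ t₂) := by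
  intro y hy
  obtain ⟨p, hp⟩ := hS.2 x hxS y hy
  exact td.mem_unionBags_side_of_walk hadj p (fun v hv => hdisj v (hp v hv)) hx

theorem exists_adj_subset_unionBags_side {S : Set V} (hS : IsConnSet G S) {t : ι}
    (hSt : ∀ v ∈ S, v ∉ td.bag t) {home : V → ι} (hhome : ∀ v, v ∈ td.bag (home v)) :
    ∃ t', T.Adj t t' ∧ S ⊆ unionBags td.bag (Side T t' t) ∧ ∃ v, Desc T t t' (home v) := by
  obtain ⟨v, hv⟩ := hS.1
  obtain ⟨p, hp, -⟩ := td.isTree.existsUnique_path t (home v)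
  have hnil : ¬ p.Nil := Walk.not_nil_of_ne fun h => hSt v hv (h ▸ hhome v)
  have ht : t ∉ p.tail.support := by
    have hnodup := hp.support_nodup
    rw [← Walk.cons_support_tail hnil] at hnodup
    exact (List.nodup_cons.mp hnodup).1
  have hside : home v ∈ Side T p.snd t := ⟨p.tail.reverse, hp.tail.reverse,
    by rwa [Walk.support_reverse, List.mem_reverse]⟩
  refine ⟨p.snd, p.adj_snd hnil, ?_, v, p, hp, p.getVert_mem_support 1⟩
  exact td.subset_unionBags_side_of_isConnSet (p.adj_snd hnil).symm hS
    (fun w hw hwt => hSt w hw hwt.2) hv (Set.mem_biUnion hside (hhome v))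

theorem exists_bag_inter_nonempty_of_isBramble [Finite V] {B : Set (Set V)}
    (hB : IsBramble G B) : ∃ t, ∀ S ∈ B, (td.bag t ∩ S).Nonempty := by
  by_contra! hcov
  choose S hSB hSt using hcov
  replace hSt : ∀ t, ∀ v ∈ S t, v ∉ td.bag t := fun t v hv hvt => (hSt t).subset ⟨hvt, hv⟩
  choose home hhome using td.exists_bag
  choose f hfadj hfside hfhome using fun t =>
    td.exists_adj_subset_unionBags_side (hB.1 _ (hSB t)) (hSt t) hhome
  have hback : ∀ t, f (f t) ≠ t := by
    intro t hft
    have hback_side := hfside (f t)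
    rw [hft] at hback_side
    obtain ⟨x, hx⟩ := (hB.1 _ (hSB t)).1
    obtain ⟨y, hy⟩ := (hB.1 _ (hSB (f t))).1
    have hunion := td.subset_unionBags_side_of_isConnSet (hfadj t).symm
      (hB.2 _ (hSB t) _ (hSB (f t)))
      (fun v hv hvt => hv.elim (hSt t v · hvt.2) (hSt (f t) v · hvt.1))
      (Or.inl hx) (hfside t hx)
    exact hSt (f t) y hy (td.mem_bag_inter_of_mem_unionBags_side (hfadj t).symm
      (hunion (Or.inr hy)) (hback_side hy)).1
  obtain ⟨t₀⟩ := td.isTree.connected.nonempty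
  refine Set.infinite_range_of_injective (td.isTree.isAcyclic.iterate_injective hfadj hback t₀)
    (td.isTree.finite_range_iterate (Set.finite_range home) (fun t => ?_) t₀)
  obtain ⟨v, hv⟩ := hfhome t
  exact ⟨home v, Set.mem_range_self v, hv⟩

end TreeDecomp

/-- if every bag of a tree-decomposition is contained in a
connected set of at most `k + 1` vertices, then every bramble has a connected
cover of at most `k + 1` vertices. -/
theorem bramble_cover_of_td {V ι : Type u} [Finite V] (G : SimpleGraph V)
    (T : SimpleGraph ι) (td : TreeDecomp G T) (k : ℕ)
    (h : ∀ t, ∃ X, td.bag t ⊆ X ∧ IsConnSet G X ∧ X.ncard ≤ k + 1)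
    (B : Set (Set V)) (hB : IsBramble G B) :
    ∃ X, IsConnCover G B X ∧ X.ncard ≤ k + 1 := by
  obtain ⟨t, ht⟩ := td.exists_bag_inter_nonempty_of_isBramble hB
  obtain ⟨X, hXt, hX, hXcard⟩ := h t
  exact ⟨X, ⟨hX, fun S hS => (ht S hS).mono (Set.inter_subset_inter_left S hXt)⟩, hXcard⟩
end
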